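/- Assume 𝓕 is a system of local filters on λ and Ē = ⟨E_κ : κ an infinite cardinal < λ⟩ where each E_κ is a uniform filter on κ. Then the Ē-closure of 𝓕 is a system of local filters on λ extending 𝓕 and satisfying condition (⊕)^sum: whenever κ < λ is an infinite cardinal and ⟨(α_ξ,Z_ξ,F_ξ) : ξ < κ⟩ is a sequence from the Ē-closure with Z_ξ ⊆ α_ζ for all ξ < ζ < κ, then for some uniform filter F on κ the triple (α₀, ∪_{ξ<κ} Z_ξ, ⊕^F_{ξ<κ} F_ξ) belongs to the Ē-closure. -/

import Mathlib

/-!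
Being a local filter on `λ` is preserved by the summation step of the closure: a sum over a
proper filter `E_κ` of proper filters is a proper filter, a union of `κ < λ` sets of size `< λ`
has size `< λ` because `λ` is regular, and the separation `Z_ξ ⊆ α_ζ` makes `α₀` the least
element of the union. Induction on the closure therefore shows it is a system of local filters,
and `(⊕)^sum` holds with the filter `E_κ` by the very rule that generates the closure.
-/

namespace RS889

noncomputable section

open Cardinal Set

universe u v

/-- `F` is a (proper) filter on the set `Z`, presented as the family of its members. -/
def IsFilterOn {α : Type u} (F : Set (Set α)) (Z : Set α) : Prop :=
  (∀ A ∈ F, A ⊆ Z) ∧ Z ∈ F ∧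
    (∀ A ∈ F, ∀ B, A ⊆ B → B ⊆ Z → B ∈ F) ∧
    (∀ A ∈ F, ∀ B ∈ F, A ∩ B ∈ F) ∧ ∅ ∉ F

/-- The family `F⁺` of `F`-positive subsets of `Z`. -/
def posOf {α : Type u} (F : Set (Set α)) (Z : Set α) : Set (Set α) :=
  {B | B ⊆ Z ∧ ∀ C ∈ F, (B ∩ C).Nonempty}

/-- `F` is an ultrafilter on the set `Z`. -/
def IsUltraOn {α : Type u} (F : Set (Set α)) (Z : Set α) : Prop :=
  IsFilterOn F Z ∧ ∀ A ⊆ Z, A ∈ F ∨ Z \ A ∈ F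

/-- An unultra filter: every positive set splits into two positive pieces. -/
def Unultra {α : Type u} (F : Set (Set α)) (Z : Set α) : Prop :=
  ∀ A ∈ posOf F Z, ∃ B ⊆ A, B ∈ posOf F Z ∧ A \ B ∈ posOf F Z

/-- The sum `⊕^E_{x ∈ X} Fx x` of the filters `Fx x` on the sets `Z x` over a filter `E` on `X`. -/
def filSum {α : Type u} {β : Type v} (X : Set α) (E : Set (Set α))
    (Z : α → Set β) (Fx : α → Set (Set β)) : Set (Set β) :=
  {A | A ⊆ (⋃ x ∈ X, Z x) ∧ {x | x ∈ X ∧ Z x ∩ A ∈ Fx x} ∈ E}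

/-- The sum `⊕_{ζ<ξ} F ζ` over the filter of co-bounded subsets of `ξ`. -/
def cobddSum {α : Type u} (ξ : Ordinal.{0}) (Z : Ordinal.{0} → Set α)
    (F : Ordinal.{0} → Set (Set α)) : Set (Set α) :=
  {A | A ⊆ (⋃ ζ ∈ Set.Iio ξ, Z ζ) ∧ ∃ β < ξ, ∀ ζ, β ≤ ζ → ζ < ξ → Z ζ ∩ A ∈ F ζ}

/-- A triple `(α, Z, F)`: an ordinal, a set of ordinals and a family of subsets of `Z`
(intended to be a filter on `Z`). -/
structure LocalFilter : Type 1 where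
  a : Ordinal.{0}
  Z : Set Ordinal.{0}
  F : Set (Set Ordinal.{0})

/-- A system of local filters on `lam`. -/
def IsLFS (lam : Cardinal.{0}) (S : Set LocalFilter) : Prop :=
  (∀ t ∈ S, t.Z ⊆ Set.Iio lam.ord ∧ #t.Z < Cardinal.lift.{1} lam ∧
      IsLeast t.Z t.a ∧ IsFilterOn t.F t.Z) ∧
    ∀ β < lam.ord, ∃ t ∈ S, β ≤ t.a

/-- The family `Q*_lam(S)`. -/
def Qstar (lam : Cardinal.{0}) (S : Set LocalFilter) : Set (Set LocalFilter) :=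
  {r | r ⊆ S ∧ #r = Cardinal.lift.{1} lam ∧
    ∀ ξ : Ordinal.{0}, #{t | t ∈ r ∧ t.a = ξ} < Cardinal.lift.{1} lam}

/-- The filter `fil(r)` on `lam` generated by `r`. -/
def fil (lam : Cardinal.{0}) (r : Set LocalFilter) : Set (Set Ordinal.{0}) :=
  {A | A ⊆ Set.Iio lam.ord ∧ ∃ ε < lam.ord, ∀ t ∈ r, ε ≤ t.a → A ∩ t.Z ∈ t.F}

/-- `r` is strongly disjoint. -/
def StronglyDisjoint (r : Set LocalFilter) : Prop :=
  (∀ s ∈ r, ∀ t ∈ r, s.a = t.a → s = t) ∧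
    ∀ s ∈ r, ∀ t ∈ r, s.a < t.a → s.Z ⊆ Set.Iio t.a

/-- The family `Q⁰_lam(S)` of strongly disjoint members of `Q*_lam(S)`. -/
def Qzero (lam : Cardinal.{0}) (S : Set LocalFilter) : Set (Set LocalFilter) :=
  {r | r ∈ Qstar lam S ∧ StronglyDisjoint r}

/-- `fil(H) = ⋃ { fil(r) : r ∈ H }`. -/
def filH (lam : Cardinal.{0}) (H : Set (Set LocalFilter)) : Set (Set Ordinal.{0}) :=
  {A | ∃ r ∈ H, A ∈ fil lam r}

/-- A uniform family of subsets of `lam`: every member has cardinality `lam`. -/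
def IsUniform (lam : Cardinal.{0}) (D : Set (Set Ordinal.{0})) : Prop :=
  ∀ A ∈ D, #A = Cardinal.lift.{1} lam

/-- `C` is a club (closed unbounded) subset of `lam`. -/
def IsClub (lam : Cardinal.{0}) (C : Set Ordinal.{0}) : Prop :=
  C ⊆ Set.Iio lam.ord ∧ (∀ β < lam.ord, ∃ γ ∈ C, β < γ) ∧
    ∀ δ, δ < lam.ord → δ ≠ 0 → (∀ β < δ, ∃ γ ∈ C, β < γ ∧ γ < δ) → δ ∈ C

/-- `St` is stationary in `lam`. -/
def IsStationary (lam : Cardinal.{0}) (St : Set Ordinal.{0}) : Prop :=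
  ∀ C, IsClub lam C → (St ∩ C).Nonempty

/-- `D` is a weakly reasonable (ultra)filter on `lam`. -/
def WeaklyReasonable (lam : Cardinal.{0}) (D : Set (Set Ordinal.{0})) : Prop :=
  ∀ f : Ordinal.{0} → Ordinal.{0},
    (∀ δ < lam.ord, f δ < lam.ord) →
    (∀ δ δ', δ ≤ δ' → δ' < lam.ord → f δ ≤ f δ') →
    (∀ β < lam.ord, ∃ δ < lam.ord, β ≤ f δ) →
    ∃ C, IsClub lam C ∧ (⋃ δ ∈ C, Set.Ico δ (δ + f δ)) ∉ D

/-- `e` is the increasing enumeration of `C ∪ {0}` (in order type `lam`). -/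
def IsEnum (lam : Cardinal.{0}) (C : Set Ordinal.{0}) (e : Ordinal.{0} → Ordinal.{0}) : Prop :=
  (∀ ξ η, ξ < η → η < lam.ord → e ξ < e η) ∧
    (∀ ξ < lam.ord, e ξ ∈ insert 0 C) ∧
    ∀ γ ∈ insert 0 C, ∃ ξ < lam.ord, e ξ = γ

/-- The quotient `D/C`, where `e` is the increasing enumeration of `C ∪ {0}`. -/
def quotFil (lam : Cardinal.{0}) (D : Set (Set Ordinal.{0})) (e : Ordinal.{0} → Ordinal.{0}) :
    Set (Set Ordinal.{0}) :=
  {A | A ⊆ Set.Iio lam.ord ∧ (⋃ ξ ∈ A, Set.Ico (e ξ) (e (ξ + 1))) ∈ D}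

/-- `d` is an increasing continuous sequence of ordinals below `lam` (indexed by `ξ < lam`). -/
def IncrCont (lam : Cardinal.{0}) (d : Ordinal.{0} → Ordinal.{0}) : Prop :=
  (∀ ξ < lam.ord, d ξ < lam.ord) ∧
    (∀ ξ η, ξ < η → η < lam.ord → d ξ < d η) ∧
    ∀ δ, δ < lam.ord → Order.IsSuccLimit δ → ∀ β < d δ, ∃ ξ < δ, β ≤ d ξ

/-- The full system `𝓕^ult` of local non-principal ultrafilters on `lam`. -/
def Fult (lam : Cardinal.{0}) : Set LocalFilter :=
  {t | t.a < lam.ord ∧ t.a ∈ t.Z ∧ t.Z ⊆ {o | t.a ≤ o ∧ o < lam.ord} ∧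
      t.Z.Infinite ∧ #t.Z < Cardinal.lift.{1} lam ∧ IsUltraOn t.F t.Z ∧
      ∀ x : Ordinal.{0}, ({x} : Set Ordinal.{0}) ∉ t.F}

/-- `Σ(p)`. -/
def SigmaP (lam : Cardinal.{0}) (p : Set LocalFilter) : Set LocalFilter :=
  {t | t ∈ Fult lam ∧ ∀ A ∈ t.F, ∃ s ∈ p, A ∩ s.Z ∈ s.F}

/-- A linked family `H ⊆ Q*_lam`. -/
def Linked (lam : Cardinal.{0}) (H : Set (Set LocalFilter)) : Prop :=
  H.Nonempty ∧ ∀ S : Set (Set LocalFilter), S ⊆ H → S.Finite → S.Nonempty →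
    #{α : Ordinal.{0} | ∃ t : LocalFilter, t.a = α ∧ ∀ p ∈ S, t ∈ SigmaP lam p} =
      Cardinal.lift.{1} lam

/-- A big family `H ⊆ Q*_lam`. -/
def Big (lam : Cardinal.{0}) (H : Set (Set LocalFilter)) : Prop :=
  H.Nonempty ∧ ∀ D ⊆ Fult lam, ∃ q ∈ H, q ⊆ D ∨ q ∩ D = ∅

/-- The condition `(⊕)^sum_S`. -/
def SumCond (lam : Cardinal.{0}) (S : Set LocalFilter) : Prop :=
  ∀ κ : Cardinal.{0}, ℵ₀ ≤ κ → κ < lam →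
    ∀ t : Ordinal.{0} → LocalFilter,
      (∀ ξ < κ.ord, t ξ ∈ S) →
      (∀ ξ ζ, ξ < ζ → ζ < κ.ord → (t ξ).Z ⊆ Set.Iio (t ζ).a) →
      ∃ E : Set (Set Ordinal.{0}), IsFilterOn E (Set.Iio κ.ord) ∧
        (∀ A ∈ E, #A = Cardinal.lift.{1} κ) ∧
        (LocalFilter.mk (t 0).a (⋃ ξ ∈ Set.Iio κ.ord, (t ξ).Z)
          (filSum (Set.Iio κ.ord) E (fun ξ => (t ξ).Z) (fun ξ => (t ξ).F))) ∈ S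

/-- `(<lam⁺)`-completeness of a subfamily `Q` of `Q*` with respect to `≤*`. -/
def Complete (lam : Cardinal.{0}) (Q : Set (Set LocalFilter)) : Prop :=
  ∀ γ : Ordinal.{0}, γ.card ≤ lam →
    ∀ p : Ordinal.{0} → Set LocalFilter,
      (∀ ξ < γ, p ξ ∈ Q) →
      (∀ ξ ζ, ξ ≤ ζ → ζ < γ → fil lam (p ξ) ⊆ fil lam (p ζ)) →
      ∃ q ∈ Q, ∀ ξ < γ, fil lam (p ξ) ⊆ fil lam q

/-- The full system `𝓕₀` of co-bounded filters on `lam`. -/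
def Fcobdd (lam : Cardinal.{0}) : Set LocalFilter :=
  {t | t.a ∈ t.Z ∧ t.Z ⊆ {o | t.a ≤ o ∧ o < lam.ord} ∧
      #t.Z < Cardinal.lift.{1} lam ∧ sSup t.Z ∉ t.Z ∧
      t.F = {A | A ⊆ t.Z ∧ ∃ β < sSup t.Z, ∀ x ∈ t.Z, β ≤ x → x ∈ A}}

/-- The `Ē`-closure of a system `S` of local filters (as an inductive family:
it is closed under `E κ`-sums of `κ`-sequences of previously obtained triples). -/
inductive EClos (lam : Cardinal.{0}) (E : Cardinal.{0} → Set (Set Ordinal.{0}))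
    (S : Set LocalFilter) : LocalFilter → Prop
  | base : ∀ t ∈ S, EClos lam E S t
  | sum : ∀ κ : Cardinal.{0}, ℵ₀ ≤ κ → κ < lam →
      ∀ t : Ordinal.{0} → LocalFilter,
        (∀ ξ < κ.ord, EClos lam E S (t ξ)) →
        (∀ ξ ζ, ξ < ζ → ζ < κ.ord → (t ξ).Z ⊆ Set.Iio (t ζ).a) →
        EClos lam E S (LocalFilter.mk (t 0).a (⋃ ξ ∈ Set.Iio κ.ord, (t ξ).Z)
          (filSum (Set.Iio κ.ord) (E κ) (fun ξ => (t ξ).Z) (fun ξ => (t ξ).F)))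

/-- The full system `𝓕^unu` of local unultra filters on `lam`. -/
def Funu (lam : Cardinal.{0}) : Set LocalFilter :=
  {t | t.Z.Nonempty ∧ t.Z ⊆ Set.Iio lam.ord ∧ #t.Z < Cardinal.lift.{1} lam ∧
      IsLeast t.Z t.a ∧ IsFilterOn t.F t.Z ∧ Unultra t.F t.Z}

/-- A pararegularity system for `F` (on `Z`), indexed by finite subsets of `κ`. -/
def PRSystem (κ : Cardinal.{0}) (F : Set (Set Ordinal.{0})) (Z : Set Ordinal.{0}) : Prop :=
  ∃ A : Finset Ordinal.{0} → Set Ordinal.{0},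
    (∀ u : Finset Ordinal.{0}, ↑u ⊆ Set.Iio κ.ord → A u ∈ F) ∧
    (∀ u v : Finset Ordinal.{0}, ↑v ⊆ Set.Iio κ.ord → u ⊆ v → A v ⊆ A u) ∧
    (∀ U : Set Ordinal.{0}, U ⊆ Set.Iio κ.ord → U.Infinite →
      (⋂ ξ ∈ U, A {ξ}) = ∅) ∧
    F = {B | B ⊆ Z ∧ ∃ u : Finset Ordinal.{0}, ↑u ⊆ Set.Iio κ.ord ∧ A u ⊆ B}

/-- `F` is a pararegular filter on `Z` (with `α = min Z`). -/
def Pararegular (lam : Cardinal.{0}) (F : Set (Set Ordinal.{0})) (Z : Set Ordinal.{0})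
    (α : Ordinal.{0}) : Prop :=
  ∃ κ : Cardinal.{0}, (Ordinal.omega0 + α).card ≤ κ ∧ κ < lam ∧ PRSystem κ F Z

/-- `F` is a strongly pararegular filter on `Z` (with `α = min Z`). -/
def StronglyPararegular (lam : Cardinal.{0}) (F : Set (Set Ordinal.{0})) (Z : Set Ordinal.{0})
    (α : Ordinal.{0}) : Prop :=
  ∃ κ : Cardinal.{0}, 2 ^ (Ordinal.omega0 + α).card ≤ κ ∧ κ < lam ∧ PRSystem κ F Z

/-- The full system `𝓕^pr` of local pararegular filters on `lam`. -/
def Fpr (lam : Cardinal.{0}) : Set LocalFilter :=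
  {t | t.Z.Infinite ∧ t.Z ⊆ Set.Iio lam.ord ∧ #t.Z < Cardinal.lift.{1} lam ∧
      IsLeast t.Z t.a ∧ IsFilterOn t.F t.Z ∧ Pararegular lam t.F t.Z t.a}

/-- The full system `𝓕^spr` of local strongly pararegular filters on `lam`. -/
def Fspr (lam : Cardinal.{0}) : Set LocalFilter :=
  {t | t.Z.Infinite ∧ t.Z ⊆ Set.Iio lam.ord ∧ #t.Z < Cardinal.lift.{1} lam ∧
      IsLeast t.Z t.a ∧ IsFilterOn t.F t.Z ∧ StronglyPararegular lam t.F t.Z t.a}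

/-- The space `^lam lam`. -/
def Fn (lam : Cardinal.{0}) : Type 1 := ↥(Set.Iio lam.ord) → ↥(Set.Iio lam.ord)

/-- The basic open set `O_s` determined by a partial function `s` of length `γ`. -/
def basicOpen (lam : Cardinal.{0}) (γ : Ordinal.{0}) (s : Ordinal.{0} → Ordinal.{0}) : Set (Fn lam) :=
  {f | ∀ ξ : ↥(Set.Iio lam.ord), (ξ : Ordinal.{0}) < γ → ((f ξ : Ordinal.{0}) = s ξ)}

/-- `X ⊆ ^lam lam` is nowhere dense. -/
def NwDense (lam : Cardinal.{0}) (X : Set (Fn lam)) : Prop :=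
  ∀ γ < lam.ord, ∀ s : Ordinal.{0} → Ordinal.{0}, (∀ ξ < γ, s ξ < lam.ord) →
    ∃ γ', γ ≤ γ' ∧ γ' < lam.ord ∧ ∃ s' : Ordinal.{0} → Ordinal.{0},
      (∀ ξ < γ', s' ξ < lam.ord) ∧ (∀ ξ < γ, s' ξ = s ξ) ∧
      basicOpen lam γ' s' ∩ X = ∅

/-- `X` belongs to the ideal `M^lam_{lam,lam}`: it is covered by `lam` many
nowhere dense sets. -/
def MeagerSet (lam : Cardinal.{0}) (X : Set (Fn lam)) : Prop :=
  ∃ A : Ordinal.{0} → Set (Fn lam), (∀ ξ < lam.ord, NwDense lam (A ξ)) ∧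
    X ⊆ ⋃ ξ ∈ Set.Iio lam.ord, A ξ

/-- `cov(M^lam_{lam,lam})`. -/
def covM (lam : Cardinal.{0}) : Cardinal.{1} :=
  sInf {c | ∃ 𝓐 : Set (Set (Fn lam)), (∀ X ∈ 𝓐, MeagerSet lam X) ∧
    ⋃₀ 𝓐 = Set.univ ∧ #𝓐 = c}

/-- Nodes of trees of sequences of ordinals: a pair (level, function). -/
abbrev TNode : Type 1 := Ordinal.{0} × (Ordinal.{0} → Ordinal.{0})

/-- Truncation of a function below `γ` (with value `0` elsewhere). -/
def truncF (γ : Ordinal.{0}) (f : Ordinal.{0} → Ordinal.{0}) : Ordinal.{0} → Ordinal.{0} :=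
  fun ξ => if ξ < γ then f ξ else 0

/-- `T` is a tree of height `lam` of (normalized) sequences of ordinals `< lam`. -/
def IsTree (lam : Cardinal.{0}) (T : Set TNode) : Prop :=
  (∀ x ∈ T, x.1 < lam.ord ∧ (∀ ξ < x.1, x.2 ξ < lam.ord) ∧ x.2 = truncF x.1 x.2) ∧
    ∀ x ∈ T, ∀ γ ≤ x.1, (γ, truncF γ x.2) ∈ T

/-- The `γ`-th level of `T`. -/
def treeLevel (T : Set TNode) (γ : Ordinal.{0}) : Set TNode := {x | x ∈ T ∧ x.1 = γ}

/-- `T` is a `lam`-Kurepa tree: a tree of height `lam` all of whose levels are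
nonempty of cardinality `< lam`. -/
def IsKurepaTree (lam : Cardinal.{0}) (T : Set TNode) : Prop :=
  IsTree lam T ∧
    ∀ γ < lam.ord, (treeLevel T γ).Nonempty ∧
      #(treeLevel T γ) < Cardinal.lift.{1} lam

/-- The set of `lam`-branches of `T` (normalized functions all of whose proper
initial segments lie in `T`). -/
def branches (lam : Cardinal.{0}) (T : Set TNode) : Set (Ordinal.{0} → Ordinal.{0}) :=
  {f | f = truncF lam.ord f ∧ ∀ γ < lam.ord, (γ, truncF γ f) ∈ T}

theorem IsFilterOn.filSum {α : Type u} {β : Type v} {X : Set α} {E : Set (Set α)}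
    {Z : α → Set β} {Fx : α → Set (Set β)} (hE : IsFilterOn E X)
    (hF : ∀ x ∈ X, IsFilterOn (Fx x) (Z x)) :
    IsFilterOn (filSum X E Z Fx) (⋃ x ∈ X, Z x) := by
  obtain ⟨hEsub, hEtop, hEup, hEinter, hEempty⟩ := hE
  have index_mem : ∀ A ∈ E, ∀ P : α → Prop, (∀ x ∈ A, P x) → {x | x ∈ X ∧ P x} ∈ E :=
    fun A hA P hP => hEup A hA _ (fun x hx => ⟨hEsub A hA hx, hP x hx⟩) fun _ hx => hx.1
  refine ⟨fun A hA => hA.1, ⟨subset_rfl, ?_⟩, ?_, ?_, ?_⟩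
  · refine index_mem X hEtop _ fun x hx => ?_
    rw [inter_eq_left.2 (subset_biUnion_of_mem hx)]
    exact (hF x hx).2.1
  · refine fun A hA B hAB hB => ⟨hB, index_mem _ hA.2 _ fun x hx => ?_⟩
    exact (hF x hx.1).2.2.1 _ hx.2 _ (inter_subset_inter_right _ hAB) inter_subset_left
  · refine fun A hA B hB => ⟨inter_subset_left.trans hA.1, ?_⟩
    refine index_mem _ (hEinter _ hA.2 _ hB.2) _ fun x hx => ?_
    rw [inter_inter_distrib_left]
    exact (hF x hx.1.1).2.2.2.1 _ hx.1.2 _ hx.2.2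
  · intro hempty
    have hindex : {x | x ∈ X ∧ Z x ∩ ∅ ∈ Fx x} = ∅ :=
      eq_empty_of_forall_notMem fun x hx => (hF x hx.1).2.2.2.2 (by simpa using hx.2)
    exact hEempty (hindex ▸ hempty.2)

theorem mk_biUnion_Iio_ord_lt {β : Type 1} {lam κ : Cardinal.{0}} (hreg : lam.IsRegular)
    (hκ : κ < lam) {Z : Ordinal.{0} → Set β} (hZ : ∀ ξ < κ.ord, #(Z ξ) < Cardinal.lift.{1} lam) :
    #(⋃ ξ ∈ Iio κ.ord, Z ξ) < Cardinal.lift.{1} lam := by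
  refine (card_biUnion_lt_iff_forall_of_isRegular hreg.lift ?_).2 hZ
  rwa [mk_Iio_ordinal, card_ord, lift_lt]

theorem isLeast_biUnion_Iio {β : Type*} [Preorder β] {γ : Ordinal.{0}} (hγ : 0 < γ)
    {Z : Ordinal.{0} → Set β} {a : Ordinal.{0} → β} (hZ : ∀ ξ < γ, IsLeast (Z ξ) (a ξ))
    (hsep : ∀ ξ, 0 < ξ → ξ < γ → Z 0 ⊆ Iio (a ξ)) :
    IsLeast (⋃ ξ ∈ Iio γ, Z ξ) (a 0) := by
  refine ⟨mem_biUnion hγ (hZ 0 hγ).1, fun x hx => ?_⟩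
  obtain ⟨ξ, hξ, hxξ⟩ := mem_iUnion₂.1 hx
  rcases eq_zero_or_pos ξ with rfl | hξpos
  · exact (hZ 0 hγ).2 hxξ
  · exact (hsep ξ hξpos hξ (hZ 0 hγ).1).le.trans ((hZ ξ hξ).2 hxξ)

def IsLocalFilterOn (lam : Cardinal.{0}) (t : LocalFilter) : Prop :=
  t.Z ⊆ Iio lam.ord ∧ #t.Z < Cardinal.lift.{1} lam ∧ IsLeast t.Z t.a ∧ IsFilterOn t.F t.Z

theorem EClos.isLocalFilterOn {lam : Cardinal.{0}} (hreg : lam.IsRegular)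
    {E : Cardinal.{0} → Set (Set Ordinal.{0})}
    (hE : ∀ κ : Cardinal.{0}, ℵ₀ ≤ κ → κ < lam → IsFilterOn (E κ) (Iio κ.ord))
    {S : Set LocalFilter} (hS : ∀ t ∈ S, IsLocalFilterOn lam t) {t : LocalFilter}
    (ht : EClos lam E S t) : IsLocalFilterOn lam t := by
  induction ht with
  | base t ht => exact hS t ht
  | sum κ hκ hκlam t _ hsep ih =>
    have hpos : 0 < κ.ord := ord_pos.2 (aleph0_pos.trans_le hκ)
    exact ⟨iUnion₂_subset fun ξ hξ => (ih ξ hξ).1,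
      mk_biUnion_Iio_ord_lt hreg hκlam fun ξ hξ => (ih ξ hξ).2.1,
      isLeast_biUnion_Iio hpos (fun ξ hξ => (ih ξ hξ).2.2.1) fun ξ hξpos hξ => hsep 0 ξ hξpos hξ,
      (hE κ hκ hκlam).filSum fun ξ hξ => (ih ξ hξ).2.2.2⟩

theorem EClos.sumCond {lam : Cardinal.{0}} {E : Cardinal.{0} → Set (Set Ordinal.{0})}
    (hE : ∀ κ : Cardinal.{0}, ℵ₀ ≤ κ → κ < lam →
      IsFilterOn (E κ) (Iio κ.ord) ∧ ∀ A ∈ E κ, #A = Cardinal.lift.{1} κ)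
    (S : Set LocalFilter) : SumCond lam {t | EClos lam E S t} :=
  fun κ hκ hκlam t ht hsep =>
    ⟨E κ, (hE κ hκ hκlam).1, (hE κ hκ hκlam).2, EClos.sum κ hκ hκlam t ht hsep⟩

theorem stmt5_general (lam : Cardinal.{0}) (hreg : lam.IsRegular)
    (F : Set LocalFilter) (hF : IsLFS lam F)
    (E : Cardinal.{0} → Set (Set Ordinal.{0}))
    (hE : ∀ κ : Cardinal.{0}, ℵ₀ ≤ κ → κ < lam →
      IsFilterOn (E κ) (Set.Iio κ.ord) ∧ ∀ A ∈ E κ, #A = Cardinal.lift.{1} κ) :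
    IsLFS lam {t | EClos lam E F t} ∧ F ⊆ {t | EClos lam E F t} ∧
      SumCond lam {t | EClos lam E F t} := by
  have hbase : F ⊆ {t | EClos lam E F t} := EClos.base
  have hlocal : ∀ t ∈ {t | EClos lam E F t}, IsLocalFilterOn lam t := fun _ ht =>
    EClos.isLocalFilterOn hreg (fun κ hκ hκlam => (hE κ hκ hκlam).1) hF.1 ht
  refine ⟨⟨hlocal, fun β hβ => ?_⟩, hbase, EClos.sumCond hE F⟩
  obtain ⟨t, ht, hβt⟩ := hF.2 β hβ
  exact ⟨t, hbase ht, hβt⟩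

/-- Proposition 1.9: the `Ē`-closure of a system of local filters is a system of local
filters extending it and satisfying `(⊕)^sum`. -/
theorem stmt5 (lam : Cardinal.{0}) (hreg : lam.IsRegular) (hunc : ℵ₀ < lam)
    (F : Set LocalFilter) (hF : IsLFS lam F)
    (E : Cardinal.{0} → Set (Set Ordinal.{0}))
    (hE : ∀ κ : Cardinal.{0}, ℵ₀ ≤ κ → κ < lam →
      IsFilterOn (E κ) (Set.Iio κ.ord) ∧ ∀ A ∈ E κ, #A = Cardinal.lift.{1} κ) :
    IsLFS lam {t | EClos lam E F t} ∧ F ⊆ {t | EClos lam E F t} ∧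
      SumCond lam {t | EClos lam E F t} :=
  stmt5_general lam hreg F hF E hE

end

end RS889
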